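/- Suppose the stationary measure ℙ satisfies conditions ID, FE (with constant γ_+ < 0) and KB, and let ℚ be a stationary measure with supp ℚ ⊆ supp ℙ. Let ε ∈ (0,1/2) and y ∈ supp ℚ be arbitrary, and consider the upper-bound auxiliary parsing of y_1^N with words y^{(1,N)}, …, y^{(ĉ_N,N)}. Then, with ℓ_+ := 2 ln N/(−γ_+), one has ℙ{x : at least one word y^{(j,N)}, 1 ≤ j ≤ ĉ_N, does not appear as a substring of x_1^N} ≤ N · exp(−N^{ε/4}/(3ℓ_+)) for all N large enough. -/

import Mathlib

open MeasureTheory Filter Asymptotics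
open scoped ENNReal Classical

noncomputable section

namespace ZM

/-- The left shift on one-sided sequences. -/
def shift {A : Type*} (x : ℕ → A) : ℕ → A := fun k => x (k + 1)

/-- The cylinder set of all sequences starting with the word `a`. -/
def cyl {A : Type*} {n : ℕ} (a : Fin n → A) : Set (ℕ → A) := {x | ∀ i : Fin n, x i = a i}

/-- The word `x_{p+1}^{p+ℓ}` of `x` (0-based: the letters at positions `p, …, p+ℓ-1`). -/
def seg {A : Type*} (y : ℕ → A) (p ℓ : ℕ) : Fin ℓ → A := fun i => y (p + i)

/-- `w` occurs in `x` at (0-based) offset `r`. -/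
def matchAt {A : Type*} (x : ℕ → A) {ℓ : ℕ} (w : Fin ℓ → A) (r : ℕ) : Prop :=
  ∀ i : Fin ℓ, x (r + i) = w i

/-- `w` appears as a substring of `x_1^N`. -/
def appears {A : Type*} (N : ℕ) (x : ℕ → A) {ℓ : ℕ} (w : Fin ℓ → A) : Prop :=
  ∃ r, r + ℓ ≤ N ∧ matchAt x w r

/-- The waiting time `W_ℓ(w, x)`: the least (1-based) position at which `w` occurs in `x`,
`⊤` if `w` never occurs. -/
def W {A : Type*} {ℓ : ℕ} (w : Fin ℓ → A) (x : ℕ → A) : ℕ∞ :=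
  sInf {r : ℕ∞ | ∃ n : ℕ, r = (n : ℕ∞) ∧ 1 ≤ n ∧ matchAt x w (n - 1)}

section ZMparsing

variable {A : Type*}

/-- Length of the Ziv–Merhav word starting at (0-based) position `p` of `y_1^N`, with
database `x_1^N`: the longest prefix of the remaining portion of `y_1^N` appearing as a
substring of `x_1^N`, or a single letter if there is no such prefix. -/
def zmLen (N : ℕ) (x y : ℕ → A) (p : ℕ) : ℕ :=
  max 1 (sSup {ℓ | p + ℓ ≤ N ∧ appears N x (seg y p ℓ)})

/-- Starting position of the `j`-th (0-based) word of the Ziv–Merhav parsing. -/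
def zmPos (N : ℕ) (x y : ℕ → A) : ℕ → ℕ
  | 0 => 0
  | j + 1 => zmPos N x y j + zmLen N x y (zmPos N x y j)

/-- `c_N(y|x)`: the number of words in the Ziv–Merhav parsing of `y_1^N` w.r.t. `x_1^N`. -/
def cN (N : ℕ) (x y : ℕ → A) : ℕ := sInf {c | N ≤ zmPos N x y c}

/-- The Ziv–Merhav estimator `Q̂_N(y, x) = c_N(y|x) ln N / N`. -/
def ZMest (N : ℕ) (x y : ℕ → A) : ℝ := (cN N x y : ℝ) * Real.log N / N

end ZMparsing

section MeasureDefs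

variable {A : Type*} [MeasurableSpace A]

/-- The measure of the cylinder of a word, as a real number. -/
def wp (μ : Measure (ℕ → A)) {n : ℕ} (a : Fin n → A) : ℝ := (μ (cyl a)).toReal

/-- `supp ℙ`: the set of sequences all of whose prefixes have positive measure. -/
def suppSet (μ : Measure (ℕ → A)) : Set (ℕ → A) := {x | ∀ n, 0 < μ (cyl (seg x 0 n))}

/-- Condition (ID): immediate decoupling on the support, with sequence `k`. -/
def CondID (μ : Measure (ℕ → A)) (k : ℕ → ℝ) : Prop :=
  Monotone k ∧ (k =o[atTop] fun n => (n : ℝ)) ∧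
    ∀ (n m : ℕ) (a : Fin n → A) (b : Fin m → A), 0 < μ (cyl a) → 0 < μ (cyl b) →
      wp μ (Fin.append a b) ≤ Real.exp (k n) * (wp μ a * wp μ b) ∧
      (0 < μ (cyl (Fin.append a b)) →
        Real.exp (-k n) * (wp μ a * wp μ b) ≤ wp μ (Fin.append a b))

/-- Condition (FE): fast enough decay, with rate `γp < 0`. -/
def CondFE (μ : Measure (ℕ → A)) (γp : ℝ) : Prop :=
  γp < 0 ∧ ∀ᶠ n : ℕ in atTop, ∀ a : Fin n → A, 0 < μ (cyl a) → wp μ a ≤ Real.exp (γp * n)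

/-- Condition (SE): slow enough decay, with rate `γm < 0`. -/
def CondSE (μ : Measure (ℕ → A)) (γm : ℝ) : Prop :=
  γm < 0 ∧ ∀ᶠ n : ℕ in atTop, ∀ a : Fin n → A, 0 < μ (cyl a) → Real.exp (γm * n) ≤ wp μ a

/-- Condition (KB): Kontoyiannis' bound on waiting times, with sequences `k`, `τ`. -/
def CondKB (μ : Measure (ℕ → A)) (k τ : ℕ → ℝ) : Prop :=
  (k =o[atTop] fun n => (n : ℝ)) ∧ (τ =o[atTop] fun n => (n : ℝ)) ∧
    ∀ (ℓ : ℕ) (a : Fin ℓ → A) (r : ℕ),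
      (μ {x | (r : ℕ∞) ≤ W a x}).toReal ≤
        Real.exp (-(Real.exp (-k ℓ) * wp μ a * (⌊((r : ℝ) - 1) / ((ℓ : ℝ) + τ ℓ)⌋ : ℝ)))

/-- Length of the next word of the auxiliary parsing of `y_1^N` starting at position `p`:
the shortest prefix of the remaining portion of `y_1^N` with measure at most `θ`, or the
whole remaining portion if there is no such prefix. -/
def auxLen (μ : Measure (ℕ → A)) (θ : ℝ) (N : ℕ) (y : ℕ → A) (p : ℕ) : ℕ :=
  if ∃ ℓ, 1 ≤ ℓ ∧ p + ℓ ≤ N ∧ wp μ (seg y p ℓ) ≤ θ then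
    sInf {ℓ | 1 ≤ ℓ ∧ p + ℓ ≤ N ∧ wp μ (seg y p ℓ) ≤ θ}
  else N - p

/-- Starting position of the `j`-th (0-based) word of the auxiliary parsing. -/
def auxPos (μ : Measure (ℕ → A)) (θ : ℝ) (N : ℕ) (y : ℕ → A) : ℕ → ℕ
  | 0 => 0
  | j + 1 => auxPos μ θ N y j + max 1 (auxLen μ θ N y (auxPos μ θ N y j))

/-- Length of the `j`-th (0-based) word of the auxiliary parsing. -/
def auxWordLen (μ : Measure (ℕ → A)) (θ : ℝ) (N : ℕ) (y : ℕ → A) (j : ℕ) : ℕ :=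
  max 1 (auxLen μ θ N y (auxPos μ θ N y j))

/-- The number of words in the auxiliary parsing of `y_1^N`. -/
def auxCount (μ : Measure (ℕ → A)) (θ : ℝ) (N : ℕ) (y : ℕ → A) : ℕ :=
  sInf {c | N ≤ auxPos μ θ N y c}

/-- Length of the next word of the block parsing within a block ending at position `e`:
the shortest prefix of the remaining portion of the block with measure at most `θ`;
`0` encodes that no such prefix exists (the rest of the block is the buffer). -/
def blkLen (μ : Measure (ℕ → A)) (θ : ℝ) (e : ℕ) (y : ℕ → A) (p : ℕ) : ℕ :=
  sInf {ℓ | 1 ≤ ℓ ∧ p + ℓ ≤ e ∧ wp μ (seg y p ℓ) ≤ θ}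

/-- Starting position of the `i`-th (0-based) word of the block starting at `q`, ending at `e`. -/
def blkPos (μ : Measure (ℕ → A)) (θ : ℝ) (e : ℕ) (y : ℕ → A) (q : ℕ) : ℕ → ℕ
  | 0 => q
  | i + 1 => blkPos μ θ e y q i + blkLen μ θ e y (blkPos μ θ e y q i)

/-- Number `d_s` of words in the block starting at `q` and ending at `e`. -/
def dCount (μ : Measure (ℕ → A)) (θ : ℝ) (e : ℕ) (y : ℕ → A) (q : ℕ) : ℕ :=
  sInf {i | blkLen μ θ e y (blkPos μ θ e y q i) = 0}

/-- The block starting at `q` and ending at `e` is good: its parsed words are pairwise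
distinct. -/
def GoodBlock (μ : Measure (ℕ → A)) (θ : ℝ) (e : ℕ) (y : ℕ → A) (q : ℕ) : Prop :=
  ∀ i j : ℕ, i < dCount μ θ e y q → j < dCount μ θ e y q →
    blkLen μ θ e y (blkPos μ θ e y q i) = blkLen μ θ e y (blkPos μ θ e y q j) →
    (∀ t < blkLen μ θ e y (blkPos μ θ e y q i),
      y (blkPos μ θ e y q i + t) = y (blkPos μ θ e y q j + t)) →
    i = j

end MeasureDefs

/-- The block length `⌊N^α⌋`. -/
def blockB (N : ℕ) (α : ℝ) : ℕ := ⌊(N : ℝ) ^ α⌋₊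

/-- The number `M_N` of blocks. -/
def blockM (N : ℕ) (α : ℝ) : ℕ := (N + blockB N α - 1) / blockB N α

/-- The starting position of the `s`-th (0-based) block. -/
def blockStart (N : ℕ) (α : ℝ) (s : ℕ) : ℕ := s * blockB N α

/-- The end position of the `s`-th (0-based) block. -/
def blockEnd (N : ℕ) (α : ℝ) (s : ℕ) : ℕ := min ((s + 1) * blockB N α) N

/-- `S_b(y_1^N)`: the set of bad blocks of the block auxiliary parsing (with threshold
`N^{-1-ε}`, word probabilities computed with `μ`). -/
def badSet {A : Type*} [MeasurableSpace A] (μ : Measure (ℕ → A)) (N : ℕ) (α ε : ℝ)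
    (y : ℕ → A) : Set ℕ :=
  {s | s < blockM N α ∧
    ¬ GoodBlock μ ((N : ℝ) ^ (-1 - ε)) (blockEnd N α s) y (blockStart N α s)}

/-- `ℓ₋ = ln N / (-2 γ₋)`. -/
def ellMinus (N : ℕ) (γm : ℝ) : ℝ := Real.log N / (-2 * γm)

/-- `ℓ₊ = 2 ln N / (-γ₊)`. -/
def ellPlus (N : ℕ) (γp : ℝ) : ℝ := 2 * Real.log N / (-γp)

/-- `d₊ = 2 N^α / ℓ₋`. -/
def dPlus (N : ℕ) (α γm : ℝ) : ℝ := 2 * (N : ℝ) ^ α / ellMinus N γm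

section CrossEntropy

variable {A : Type*} [MeasurableSpace A] [Fintype A]

/-- The `n`-th cross-entropy average `-(1/n) ∑_{a ∈ 𝒜ⁿ} ℚ[a] ln ℙ[a]`, real-valued version. -/
def hcSeq (μP μQ : Measure (ℕ → A)) (n : ℕ) : ℝ :=
  -(1 / (n : ℝ)) * ∑ a : Fin n → A, wp μQ a * Real.log (wp μP a)

/-- `-ln p` as an element of `[0, ∞]`, for `p ∈ [0, 1]`; equals `⊤` when `p = 0`. -/
def negLog (p : ℝ≥0∞) : ℝ≥0∞ := if p = 0 then ⊤ else ENNReal.ofReal (-Real.log p.toReal)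

/-- The `n`-th cross-entropy average, `[0, ∞]`-valued version. -/
def hcSeqE (μP μQ : Measure (ℕ → A)) (n : ℕ) : ℝ≥0∞ :=
  (∑ a : Fin n → A, μQ (cyl a) * negLog (μP (cyl a))) / (n : ℝ≥0∞)

end CrossEntropy

end ZM

/-!
Each word `w` of the parsing is heavy and short. Its prefix without the last letter weighs more
than `N^{-1+ε} ≥ 1/N`, so (FE) bounds its length by `ℓ₊`, and by (ID) the last letter costs
only a constant times `e^{-o(ℓ₊)}`, so `ℙ[w] ≥ e^{-o(ℓ₊)} N^{-1+ε}`. Then (KB) says that `w` is missing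
from `x_1^N` with probability at most `exp(-e^{-o(ℓ₊)} ℙ[w] N / (3ℓ₊))`, and since
`e^{-o(ℓ₊)} = N^{-o(1)}` the exponent is at least `N^{ε/2} / (3ℓ₊) ≥ N^{ε/4} / (3ℓ₊)`. Words too
short for `τ_ℓ = o(ℓ)` to be effective are first enlarged to a window of fixed length, whose
weight is bounded below by a constant. A union bound over the at most `N` words concludes.
-/

theorem Asymptotics.IsLittleO.exists_le_mul_add {f : ℕ → ℝ}
    (hf : f =o[atTop] fun n => (n : ℝ)) {δ : ℝ} (hδ : 0 < δ) :
    ∃ C, ∀ n, f n ≤ δ * n + C := by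
  obtain ⟨n₀, hn₀⟩ := eventually_atTop.1 (hf.def hδ)
  refine ⟨∑ i ∈ Finset.range n₀, |f i|, fun n => ?_⟩
  have hsum : 0 ≤ ∑ i ∈ Finset.range n₀, |f i| := Finset.sum_nonneg fun i _ => abs_nonneg _
  have hδn : 0 ≤ δ * n := by positivity
  rcases lt_or_ge n n₀ with hn | hn
  · have := Finset.single_le_sum (fun i _ => abs_nonneg (f i)) (Finset.mem_range.2 hn)
    linarith [le_abs_self (f n)]
  · have := hn₀ n hn
    rw [Real.norm_eq_abs, Real.norm_natCast] at this
    linarith [le_abs_self (f n)]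

namespace ZM

section Words

variable {A : Type*}

theorem shift_iterate_apply (x : ℕ → A) (p k : ℕ) : shift^[p] x k = x (k + p) := by
  induction p generalizing k with
  | zero => rfl
  | succ p ih => rw [Function.iterate_succ_apply', shift, ih]; congr 1; omega

theorem seg_append (y : ℕ → A) (p m n : ℕ) :
    Fin.append (seg y p m) (seg y (p + m) n) = seg y p (m + n) := by
  funext i
  refine Fin.addCases (fun i => ?_) (fun i => ?_) i
  · simp [seg]
  · simp [seg, Nat.add_assoc]

theorem appears_seg_of_subword {N : ℕ} {x y : ℕ → A} {p ℓ q m : ℕ} (hqp : q ≤ p)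
    (hcov : p + ℓ ≤ q + m) (h : appears N x (seg y q m)) : appears N x (seg y p ℓ) := by
  obtain ⟨r, hr, hm⟩ := h
  refine ⟨r + (p - q), by omega, fun i => ?_⟩
  have := hm ⟨p - q + i, by omega⟩
  simp only [seg] at this ⊢
  rw [Nat.add_assoc, this]
  congr 1
  omega

theorem setOf_not_appears_subset {N ℓ : ℕ} (w : Fin ℓ → A) (hℓ : ℓ ≤ N) :
    {x : ℕ → A | ¬ appears N x w} ⊆ {x | ((N - ℓ + 2 : ℕ) : ℕ∞) ≤ W w x} := by
  intro x hx
  simp only [Set.mem_ofPred_eq, W]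
  refine le_sInf ?_
  rintro r ⟨n, rfl, hn1, hmatch⟩
  rw [Nat.cast_le]
  by_contra! h
  exact hx ⟨n - 1, by omega, hmatch⟩

end Words

section Measure

variable {A : Type*} [MeasurableSpace A] (μ : Measure (ℕ → A))

theorem wp_nonneg {n : ℕ} (a : Fin n → A) : 0 ≤ wp μ a := ENNReal.toReal_nonneg

theorem wp_of_fin_zero [IsProbabilityMeasure μ] (a : Fin 0 → A) : wp μ a = 1 := by
  simp [wp, cyl]

theorem wp_pos [IsFiniteMeasure μ] {n : ℕ} {a : Fin n → A} (h : 0 < μ (cyl a)) :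
    0 < wp μ a :=
  ENNReal.toReal_pos h.ne' (measure_ne_top μ _)

theorem measure_cyl_seg_pos (hstat : MeasurePreserving shift μ μ) {y : ℕ → A}
    (hy : y ∈ suppSet μ) (p n : ℕ) : 0 < μ (cyl (seg y p n)) := by
  have hsub : cyl (seg y 0 (p + n)) ⊆ shift^[p] ⁻¹' cyl (seg y p n) := by
    intro x hx i
    simpa [seg, shift_iterate_apply, Nat.add_comm] using hx ⟨p + i, by omega⟩
  calc 0 < μ (cyl (seg y 0 (p + n))) := hy (p + n)
    _ ≤ μ (shift^[p] ⁻¹' cyl (seg y p n)) := measure_mono hsub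
    _ ≤ μ.map shift^[p] (cyl (seg y p n)) :=
        Measure.le_map_apply (hstat.iterate p).measurable.aemeasurable _
    _ = μ (cyl (seg y p n)) := by rw [(hstat.iterate p).map_eq]

theorem exists_pos_le_wp [Fintype A] [IsFiniteMeasure μ] (n : ℕ) :
    ∃ c > 0, ∀ a : Fin n → A, 0 < μ (cyl a) → c ≤ wp μ a := by
  set s := Finset.univ.filter fun a : Fin n → A => 0 < μ (cyl a)
  have hmem {a : Fin n → A} (ha : 0 < μ (cyl a)) : a ∈ s := by simp [s, ha]
  rcases s.eq_empty_or_nonempty with hs | hs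
  · exact ⟨1, one_pos, fun a ha => absurd (hmem ha) (hs ▸ Finset.notMem_empty a)⟩
  · obtain ⟨a₀, ha₀, hmin⟩ := s.exists_min_image (wp μ) hs
    exact ⟨wp μ a₀, wp_pos μ (Finset.mem_filter.1 ha₀).2, fun a ha => hmin a (hmem ha)⟩

variable {μ}

theorem CondID.mul_le_wp_seg_succ {k : ℕ → ℝ} (hID : CondID μ k)
    (hstat : MeasurePreserving shift μ μ) {y : ℕ → A} (hy : y ∈ suppSet μ) (p m : ℕ) :
    Real.exp (-k m) * (wp μ (seg y p m) * wp μ (seg y (p + m) 1)) ≤ wp μ (seg y p (m + 1)) := by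
  have h := (hID.2.2 m 1 _ _ (measure_cyl_seg_pos μ hstat hy p m)
    (measure_cyl_seg_pos μ hstat hy (p + m) 1)).2
  rw [seg_append] at h
  exact h (measure_cyl_seg_pos μ hstat hy p (m + 1))

theorem tendsto_ellPlus_atTop {γ : ℝ} (hγ : γ < 0) :
    Tendsto (fun N : ℕ => ellPlus N γ) atTop atTop := by
  have hlog := Real.tendsto_log_atTop.comp tendsto_natCast_atTop_atTop
  exact (hlog.const_mul_atTop two_pos).atTop_div_const (neg_pos.2 hγ)

theorem eventually_mul_ellPlus_le {γ : ℝ} (hγ : γ < 0) (a : ℝ) :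
    ∀ᶠ N : ℕ in atTop, a * ellPlus N γ ≤ N := by
  have hG : 0 < -γ := neg_pos.2 hγ
  have hc : 0 < -γ / (2 * (|a| + 1)) := by positivity
  filter_upwards [tendsto_natCast_atTop_atTop.eventually (Real.isLittleO_log_id_atTop.bound hc)]
    with N hN
  rw [Real.norm_eq_abs, Real.norm_eq_abs, id, abs_of_nonneg (Real.log_natCast_nonneg N),
    Nat.abs_cast, div_mul_eq_mul_div, le_div_iff₀ (by positivity)] at hN
  have hell : ellPlus N γ ≤ N / (|a| + 1) := by
    rw [ellPlus, div_le_div_iff₀ hG (by positivity)]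
    linarith
  calc a * ellPlus N γ ≤ (|a| + 1) * ellPlus N γ := by
        gcongr
        · exact div_nonneg (by positivity) hG.le
        · linarith [le_abs_self a]
    _ ≤ N := by rw [le_div_iff₀' (by positivity)] at hell; exact hell

theorem CondFE.eventually_add_one_le_ellPlus {γ : ℝ} (hFE : CondFE μ γ) :
    ∀ᶠ N : ℕ in atTop, ∀ m (a : Fin m → A), 0 < μ (cyl a) → (N : ℝ)⁻¹ < wp μ a →
      (m : ℝ) + 1 ≤ ellPlus N γ := by
  obtain ⟨hγ, hdecay⟩ := hFE
  obtain ⟨nF, hnF⟩ := eventually_atTop.1 hdecay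
  have hlog := Real.tendsto_log_atTop.comp tendsto_natCast_atTop_atTop
  filter_upwards [hlog.eventually_ge_atTop (-γ * (nF + 1)), eventually_gt_atTop 0]
    with N hN hN0 m a ha hwp
  rw [Function.comp_apply] at hN
  have hG : 0 < -γ := neg_pos.2 hγ
  rw [ellPlus, le_div_iff₀ hG]
  rcases lt_or_ge m nF with hm | hm
  · have : (m : ℝ) + 1 ≤ nF := by exact_mod_cast hm
    nlinarith
  · have hlt : -Real.log N < γ * m := by
      rw [← Real.exp_lt_exp, Real.exp_neg, Real.exp_log (by positivity)]
      exact hwp.trans_le (hnF m hm a ha)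
    have : (0 : ℝ) ≤ nF := Nat.cast_nonneg _
    nlinarith [mul_le_mul_of_nonneg_left this hG.le]

section Parsing

variable (μ : Measure (ℕ → A)) (θ : ℝ) (N : ℕ) (y : ℕ → A)

theorem le_auxPos (j : ℕ) : j ≤ auxPos μ θ N y j := by
  induction j with
  | zero => exact le_rfl
  | succ j ih => simp only [auxPos]; omega

theorem auxCount_le : auxCount μ θ N y ≤ N :=
  Nat.sInf_le (le_auxPos μ θ N y N)

theorem auxPos_lt {j : ℕ} (hj : j < auxCount μ θ N y) : auxPos μ θ N y j < N :=
  not_le.1 (Nat.notMem_of_lt_sInf (s := {c | N ≤ auxPos μ θ N y c}) hj)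

variable {μ θ N y}

theorem add_auxLen_le {p : ℕ} (hp : p < N) : p + auxLen μ θ N y p ≤ N := by
  unfold auxLen
  split_ifs with h
  · exact (Nat.sInf_mem h).2.1
  · omega

theorem one_le_auxLen {p : ℕ} (hp : p < N) : 1 ≤ auxLen μ θ N y p := by
  unfold auxLen
  split_ifs with h
  · exact (Nat.sInf_mem h).1
  · omega

theorem lt_wp_of_lt_auxLen {p m : ℕ} (hm1 : 1 ≤ m) (hm : m < auxLen μ θ N y p) :
    θ < wp μ (seg y p m) := by
  by_contra! hle
  unfold auxLen at hm
  split_ifs at hm with h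
  · set S := {ℓ | 1 ≤ ℓ ∧ p + ℓ ≤ N ∧ wp μ (seg y p ℓ) ≤ θ}
    have hS : sInf S ∈ S := Nat.sInf_mem h
    have hmem : m ∈ S := ⟨hm1, by have := hS.2.1; omega, hle⟩
    exact (Nat.sInf_le hmem).not_gt hm
  · exact h ⟨m, hm1, by omega, hle⟩

theorem auxWordLen_eq {j : ℕ} (hj : j < auxCount μ θ N y) :
    auxWordLen μ θ N y j = auxLen μ θ N y (auxPos μ θ N y j) :=
  max_eq_right (one_le_auxLen (auxPos_lt μ θ N y hj))

theorem auxPos_add_auxWordLen_le {j : ℕ} (hj : j < auxCount μ θ N y) :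
    auxPos μ θ N y j + auxWordLen μ θ N y j ≤ N := by
  rw [auxWordLen_eq hj]
  exact add_auxLen_le (auxPos_lt μ θ N y hj)

-- For a one-letter word the prefix is the empty word, of weight `1`.
theorem lt_wp_seg_auxWordLen_sub_one [IsProbabilityMeasure μ] (hθ : θ < 1) (j : ℕ) :
    θ < wp μ (seg y (auxPos μ θ N y j) (auxWordLen μ θ N y j - 1)) := by
  rcases Nat.eq_zero_or_pos (auxWordLen μ θ N y j - 1) with h0 | hpos
  · rw [h0, wp_of_fin_zero]
    exact hθ
  · refine lt_wp_of_lt_auxLen (N := N) hpos ?_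
    unfold auxWordLen at hpos ⊢
    omega

end Parsing

theorem div_three_mul_le_floor {N ℓ τ L : ℝ} (hℓ : 0 < ℓ) (hτ : |τ| ≤ ℓ / 2) (hℓL : ℓ ≤ L)
    (hN : 5 * L ≤ N) : N / (3 * L) ≤ ⌊(N - ℓ + 1) / (ℓ + τ)⌋ := by
  obtain ⟨hτl, hτu⟩ := abs_le.1 hτ
  have hL : 0 < L := hℓ.trans_le hℓL
  have hq : N / (3 * L) * ℓ ≤ N / 3 := by
    rw [div_mul_eq_mul_div, div_le_div_iff₀ (by positivity) (by norm_num)]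
    nlinarith
  have hmain : N / (3 * L) + 1 ≤ (N - ℓ + 1) / (ℓ + τ) := by
    rw [le_div_iff₀ (by linarith)]
    nlinarith [div_nonneg (hL.le.trans (by linarith) : (0:ℝ) ≤ N) (by positivity : (0:ℝ) ≤ 3 * L)]
  linarith [Int.sub_one_lt_floor ((N - ℓ + 1) / (ℓ + τ))]

theorem CondKB.measure_not_appears_le [IsFiniteMeasure μ] {k τ : ℕ → ℝ} (hKB : CondKB μ k τ)
    {N ℓ : ℕ} (w : Fin ℓ → A) (hℓ : ℓ ≤ N) :
    μ {x | ¬ appears N x w} ≤ ENNReal.ofReal (Real.exp (-(Real.exp (-k ℓ) * wp μ w *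
      ⌊((N : ℝ) - ℓ + 1) / (ℓ + τ ℓ)⌋))) := by
  have hr : (((N - ℓ + 2 : ℕ) : ℝ) - 1) = (N : ℝ) - ℓ + 1 := by push_cast [hℓ]; ring
  calc μ {x | ¬ appears N x w} ≤ μ {x | ((N - ℓ + 2 : ℕ) : ℕ∞) ≤ W w x} :=
        measure_mono (setOf_not_appears_subset w hℓ)
    _ ≤ _ := by
      rw [← ENNReal.ofReal_toReal (measure_ne_top μ _), ← hr]
      exact ENNReal.ofReal_le_ofReal (hKB.2.2 ℓ w _)

theorem CondKB.exists_measure_not_appears_le [IsFiniteMeasure μ] {k τ : ℕ → ℝ}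
    (hKB : CondKB μ k τ) {δ : ℝ} (hδ : 0 < δ) :
    ∃ n₁ : ℕ, ∃ c > 0, ∀ (N m : ℕ) (w : Fin m → A) (L : ℝ), n₁ ≤ m → (m : ℝ) ≤ L →
      5 * L ≤ N → μ {x | ¬ appears N x w} ≤
        ENNReal.ofReal (Real.exp (-(c * Real.exp (-(δ * L)) * wp μ w * (N / (3 * L))))) := by
  obtain ⟨C, hC⟩ := hKB.1.exists_le_mul_add hδ
  obtain ⟨n₀, hn₀⟩ := eventually_atTop.1 (hKB.2.1.def (by norm_num : (0 : ℝ) < 1 / 2))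
  refine ⟨max n₀ 1, Real.exp (-C), Real.exp_pos _, fun N m w L hm hmL hLN => ?_⟩
  have hm1 : (1 : ℝ) ≤ m := by exact_mod_cast le_of_max_le_right hm
  have hτ : |τ m| ≤ m / 2 := by
    have := hn₀ m (le_of_max_le_left hm)
    rw [Real.norm_eq_abs, Real.norm_natCast] at this
    linarith
  have hmN : m ≤ N := by exact_mod_cast (show (m : ℝ) ≤ N by linarith)
  refine (hKB.measure_not_appears_le w hmN).trans (ENNReal.ofReal_le_ofReal ?_)
  rw [Real.exp_le_exp, neg_le_neg_iff]
  have hk : Real.exp (-C) * Real.exp (-(δ * L)) ≤ Real.exp (-k m) := by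
    rw [← Real.exp_add, Real.exp_le_exp]
    nlinarith [hC m]
  have hL : 0 < L := by linarith
  exact mul_le_mul (mul_le_mul_of_nonneg_right hk (wp_nonneg μ w))
    (div_three_mul_le_floor (by linarith) hτ hmL hLN) (by positivity)
    (mul_nonneg (Real.exp_pos _).le (wp_nonneg μ w))

theorem eventually_auxWordLen_le_ellPlus_and_le_wp [Fintype A] [IsProbabilityMeasure μ]
    (hstat : MeasurePreserving shift μ μ) {k : ℕ → ℝ} {γ : ℝ} (hID : CondID μ k)
    (hFE : CondFE μ γ) {y : ℕ → A} (hy : y ∈ suppSet μ) {ε : ℝ} (hε0 : 0 ≤ ε) (hε1 : ε < 1)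
    {δ : ℝ} (hδ : 0 < δ) :
    ∃ c > 0, ∀ᶠ N : ℕ in atTop, ∀ j < auxCount μ ((N : ℝ) ^ (-1 + ε)) N y,
      (auxWordLen μ ((N : ℝ) ^ (-1 + ε)) N y j : ℝ) ≤ ellPlus N γ ∧
      c * Real.exp (-(δ * ellPlus N γ)) * (N : ℝ) ^ (-1 + ε) ≤
        wp μ (seg y (auxPos μ ((N : ℝ) ^ (-1 + ε)) N y j)
          (auxWordLen μ ((N : ℝ) ^ (-1 + ε)) N y j)) := by
  obtain ⟨C, hC⟩ := hID.2.1.exists_le_mul_add hδ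
  obtain ⟨p₀, hp₀, hp₀le⟩ := exists_pos_le_wp μ 1
  refine ⟨Real.exp (-C) * p₀, by positivity, ?_⟩
  filter_upwards [hFE.eventually_add_one_le_ellPlus, eventually_gt_atTop 1] with N hN hN1 j hj
  set θ := (N : ℝ) ^ (-1 + ε)
  set p := auxPos μ θ N y j
  obtain ⟨m, hm⟩ : ∃ m, auxWordLen μ θ N y j = m + 1 :=
    ⟨auxWordLen μ θ N y j - 1, by unfold auxWordLen; omega⟩
  have hN1' : (1 : ℝ) < N := by exact_mod_cast hN1
  have hθ : θ < 1 := Real.rpow_lt_one_of_one_lt_of_neg hN1' (by linarith)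
  have hprefix : θ < wp μ (seg y p m) := by
    have := lt_wp_seg_auxWordLen_sub_one (μ := μ) (N := N) (y := y) hθ j
    rwa [hm, Nat.add_sub_cancel] at this
  have hNθ : (N : ℝ)⁻¹ ≤ θ := by
    rw [← Real.rpow_neg_one]
    exact Real.rpow_le_rpow_of_exponent_le hN1'.le (by linarith)
  have hmL := hN m _ (measure_cyl_seg_pos μ hstat hy p m) (hNθ.trans_lt hprefix)
  rw [hm, Nat.cast_succ]
  refine ⟨hmL, ?_⟩
  have hk : Real.exp (-C) * Real.exp (-(δ * ellPlus N γ)) ≤ Real.exp (-k m) := by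
    rw [← Real.exp_add, Real.exp_le_exp]
    nlinarith [hC m]
  calc Real.exp (-C) * p₀ * Real.exp (-(δ * ellPlus N γ)) * θ
      = Real.exp (-C) * Real.exp (-(δ * ellPlus N γ)) * (θ * p₀) := by ring
    _ ≤ Real.exp (-k m) * (wp μ (seg y p m) * wp μ (seg y (p + m) 1)) := by
      have hletter := hp₀le _ (measure_cyl_seg_pos μ hstat hy (p + m) 1)
      gcongr
      exact wp_nonneg μ _
    _ ≤ wp μ (seg y p (m + 1)) := hID.mul_le_wp_seg_succ hstat hy p m

theorem exists_window_not_appears (hstat : MeasurePreserving shift μ μ) {y : ℕ → A}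
    (hy : y ∈ suppSet μ) {N p ℓ n₁ : ℕ} (hpℓ : p + ℓ ≤ N) (hn₁ : n₁ ≤ N) {b c : ℝ}
    (hb : b ≤ wp μ (seg y p ℓ)) (hc : ∀ a : Fin n₁ → A, 0 < μ (cyl a) → c ≤ wp μ a)
    (hbc : b ≤ c) :
    ∃ q m, {x | ¬ appears N x (seg y p ℓ)} ⊆ {x | ¬ appears N x (seg y q m)} ∧
      n₁ ≤ m ∧ m ≤ max ℓ n₁ ∧ b ≤ wp μ (seg y q m) := by
  by_cases hℓ : n₁ ≤ ℓ
  · exact ⟨p, ℓ, subset_rfl, hℓ, le_max_left _ _, hb⟩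
  · refine ⟨min p (N - n₁), n₁, fun x hx h => hx ?_, le_rfl, le_max_right _ _,
      hbc.trans (hc _ (measure_cyl_seg_pos μ hstat hy _ n₁))⟩
    exact appears_seg_of_subword (min_le_left _ _) (by omega) h

theorem exp_neg_mul_ellPlus {γ : ℝ} (hγ : γ < 0) {N : ℕ} (hN : 0 < N) (s : ℝ) :
    Real.exp (-(s * -γ / 2 * ellPlus N γ)) = (N : ℝ) ^ (-s) := by
  rw [Real.rpow_def_of_pos (by exact_mod_cast hN), ellPlus]
  have : γ ≠ 0 := hγ.ne
  field_simp

theorem rpow_div_three_mul_le {N L ε c₁ c₂ w : ℝ} (hN : 0 < N) (hL : 0 < L) (hc₁ : 0 < c₁)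
    (hc : 1 ≤ c₁ * c₂ * N ^ (ε / 4)) (hw : c₂ * N ^ (-(ε / 4)) * N ^ (-1 + ε) ≤ w) :
    N ^ (ε / 4) / (3 * L) ≤ c₁ * N ^ (-(ε / 4)) * w * (N / (3 * L)) := by
  have hgain : N ^ (ε / 4) ≤ c₁ * N ^ (-(ε / 4)) * (c₂ * N ^ (-(ε / 4)) * N ^ (-1 + ε)) * N := by
    calc N ^ (ε / 4) ≤ (c₁ * c₂ * N ^ (ε / 4)) * N ^ (ε / 4) :=
          le_mul_of_one_le_left (by positivity) hc
      _ = c₁ * c₂ * (N ^ (-(ε / 4)) * N ^ (-(ε / 4)) * N ^ (-1 + ε) * N ^ (1 : ℝ)) := by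
          rw [← Real.rpow_add hN, ← Real.rpow_add hN, ← Real.rpow_add hN, mul_assoc (c₁ * c₂),
            ← Real.rpow_add hN]
          ring_nf
      _ = _ := by rw [Real.rpow_one]; ring
  calc N ^ (ε / 4) / (3 * L)
      ≤ c₁ * N ^ (-(ε / 4)) * (c₂ * N ^ (-(ε / 4)) * N ^ (-1 + ε)) * N / (3 * L) := by gcongr
    _ = c₁ * N ^ (-(ε / 4)) * (c₂ * N ^ (-(ε / 4)) * N ^ (-1 + ε)) * (N / (3 * L)) := by ring
    _ ≤ c₁ * N ^ (-(ε / 4)) * w * (N / (3 * L)) := by gcongr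

theorem eventually_measure_not_appears_auxWord_le [Fintype A] [IsProbabilityMeasure μ]
    (hstat : MeasurePreserving shift μ μ) {k kKB τ : ℕ → ℝ} {γ : ℝ} (hID : CondID μ k)
    (hFE : CondFE μ γ) (hKB : CondKB μ kKB τ) {y : ℕ → A} (hy : y ∈ suppSet μ) {ε : ℝ}
    (hε0 : 0 < ε) (hε1 : ε < 1) :
    ∀ᶠ N : ℕ in atTop, ∀ j < auxCount μ ((N : ℝ) ^ (-1 + ε)) N y,
      μ {x | ¬ appears N x (seg y (auxPos μ ((N : ℝ) ^ (-1 + ε)) N y j)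
        (auxWordLen μ ((N : ℝ) ^ (-1 + ε)) N y j))} ≤
        ENNReal.ofReal (Real.exp (-(N : ℝ) ^ (ε / 4) / (3 * ellPlus N γ))) := by
  have hγ := hFE.1
  have hδ : 0 < ε / 4 * -γ / 2 := by have := neg_pos.2 hγ; positivity
  obtain ⟨n₁, c₁, hc₁, hwindow⟩ := hKB.exists_measure_not_appears_le hδ
  obtain ⟨c₂, hc₂, hword⟩ :=
    eventually_auxWordLen_le_ellPlus_and_le_wp hstat hID hFE hy hε0.le hε1 hδ
  obtain ⟨c₃, hc₃, hc₃le⟩ := exists_pos_le_wp μ n₁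
  have hpow : Tendsto (fun N : ℕ => (N : ℝ) ^ (ε / 4)) atTop atTop :=
    (tendsto_rpow_atTop (by positivity)).comp tendsto_natCast_atTop_atTop
  have hθ : Tendsto (fun N : ℕ => c₂ * (N : ℝ) ^ (-1 + ε)) atTop (nhds 0) := by
    simpa [neg_add_eq_sub] using ((tendsto_rpow_neg_atTop (by linarith : 0 < 1 - ε)).comp
      tendsto_natCast_atTop_atTop).const_mul c₂
  filter_upwards [hword, eventually_ge_atTop n₁, eventually_gt_atTop 0,
    (tendsto_ellPlus_atTop hγ).eventually_ge_atTop (max n₁ 1), eventually_mul_ellPlus_le hγ 5,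
    hθ.eventually_le_const hc₃,
    (hpow.const_mul_atTop (mul_pos hc₁ hc₂)).eventually_ge_atTop 1]
    with N hword hn₁N hN0 hn₁L hLN hθN hpowN j hj
  set L := ellPlus N γ
  set θ := (N : ℝ) ^ (-1 + ε)
  have hL : 0 < L := lt_of_lt_of_le one_pos (le_trans (by simp) hn₁L)
  have hN : (0 : ℝ) < N := by exact_mod_cast hN0
  have hdecay : Real.exp (-(ε / 4 * -γ / 2 * L)) = (N : ℝ) ^ (-(ε / 4)) :=
    exp_neg_mul_ellPlus hγ hN0 _
  obtain ⟨hℓL, hwp⟩ := hword j hj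
  have hb : c₂ * Real.exp (-(ε / 4 * -γ / 2 * L)) * θ ≤ c₃ := by
    refine le_trans ?_ hθN
    rw [mul_right_comm]
    exact mul_le_of_le_one_right (by positivity) (Real.exp_le_one_iff.2 (by nlinarith))
  obtain ⟨q, m, hsub, hn₁m, hmℓ, hwpm⟩ :=
    exists_window_not_appears hstat hy (auxPos_add_auxWordLen_le hj) hn₁N hwp hc₃le hb
  have hmL : (m : ℝ) ≤ L := by
    have : (m : ℝ) ≤ max (auxWordLen μ θ N y j : ℝ) n₁ := by exact_mod_cast hmℓ
    exact this.trans (max_le hℓL ((le_max_left _ _).trans hn₁L))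
  refine (measure_mono hsub).trans ((hwindow N m _ L hn₁m hmL hLN).trans
    (ENNReal.ofReal_le_ofReal (Real.exp_le_exp.2 ?_)))
  rw [hdecay] at hwpm ⊢
  rw [neg_div, neg_le_neg_iff]
  exact rpow_div_three_mul_le hN hL hc₁ hpowN hwpm

end Measure

theorem _root_.MeasureTheory.measure_setOf_exists_lt_le {α : Type*} [MeasurableSpace α]
    (μ : Measure α) (P : ℕ → α → Prop) {n : ℕ} {b : ℝ≥0∞}
    (h : ∀ j < n, μ {x | P j x} ≤ b) : μ {x | ∃ j < n, P j x} ≤ n * b := by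
  have hunion : {x | ∃ j < n, P j x} = ⋃ j ∈ Finset.range n, {x | P j x} := by
    ext x
    simp
  calc μ {x | ∃ j < n, P j x} ≤ ∑ j ∈ Finset.range n, μ {x | P j x} :=
        hunion ▸ measure_biUnion_finset_le _ _
    _ ≤ ∑ _j ∈ Finset.range n, b := Finset.sum_le_sum fun j hj => h j (Finset.mem_range.1 hj)
    _ = n * b := by rw [Finset.sum_const, Finset.card_range, nsmul_eq_mul]

theorem key_prob_ub_general {A : Type*} [Fintype A] [MeasurableSpace A]
    (μP μQ : Measure (ℕ → A)) [IsProbabilityMeasure μP]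
    (hPstat : MeasurePreserving shift μP μP)
    (kP kKB τKB : ℕ → ℝ) (γP : ℝ)
    (hPID : CondID μP kP) (hPFE : CondFE μP γP) (hPKB : CondKB μP kKB τKB)
    (hsupp : suppSet μQ ⊆ suppSet μP)
    (ε : ℝ) (hε : 0 < ε ∧ ε < 1 / 2) (y : ℕ → A) (hy : y ∈ suppSet μQ) :
    ∀ᶠ N : ℕ in atTop,
      (μP {x | ∃ j < auxCount μP ((N : ℝ) ^ (-1 + ε)) N y,
          ¬ appears N x (seg y (auxPos μP ((N : ℝ) ^ (-1 + ε)) N y j)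
            (auxWordLen μP ((N : ℝ) ^ (-1 + ε)) N y j))}).toReal ≤
        (N : ℝ) * Real.exp (-(N : ℝ) ^ (ε / 4) / (3 * ellPlus N γP)) := by
  filter_upwards [eventually_measure_not_appears_auxWord_le hPstat hPID hPFE hPKB (hsupp hy)
    hε.1 (by linarith [hε.2])] with N hword
  refine ENNReal.toReal_le_of_le_ofReal (by positivity) ?_
  calc _ ≤ (auxCount μP ((N : ℝ) ^ (-1 + ε)) N y : ℝ≥0∞) *
        ENNReal.ofReal (Real.exp (-(N : ℝ) ^ (ε / 4) / (3 * ellPlus N γP))) :=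
        measure_setOf_exists_lt_le μP _ hword
    _ ≤ N * ENNReal.ofReal (Real.exp (-(N : ℝ) ^ (ε / 4) / (3 * ellPlus N γP))) := by
        gcongr
        exact_mod_cast auxCount_le μP _ N y
    _ = _ := by rw [ENNReal.ofReal_mul (by positivity), ENNReal.ofReal_natCast]

/-- **Lemma 3.3.** Under (ID), (FE), (KB) for `ℙ`, for `y ∈ supp ℚ ⊆ supp ℙ`, the
probability that some word of the upper-bound auxiliary parsing of `y_1^N` (with threshold
`N^{-1+ε}`) fails to appear in `x_1^N` is at most `N exp(-N^{ε/4}/(3 ℓ₊))`, for `N` large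
enough. -/
theorem key_prob_ub {A : Type*} [Fintype A] [MeasurableSpace A]
    (μP μQ : Measure (ℕ → A)) [IsProbabilityMeasure μP] [IsProbabilityMeasure μQ]
    (hPstat : MeasurePreserving shift μP μP)
    (hQstat : MeasurePreserving shift μQ μQ)
    (kP kKB τKB : ℕ → ℝ) (γP : ℝ)
    (hPID : CondID μP kP) (hPFE : CondFE μP γP) (hPKB : CondKB μP kKB τKB)
    (hsupp : suppSet μQ ⊆ suppSet μP)
    (ε : ℝ) (hε : 0 < ε ∧ ε < 1 / 2) (y : ℕ → A) (hy : y ∈ suppSet μQ) :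
    ∀ᶠ N : ℕ in atTop,
      (μP {x | ∃ j < auxCount μP ((N : ℝ) ^ (-1 + ε)) N y,
          ¬ appears N x (seg y (auxPos μP ((N : ℝ) ^ (-1 + ε)) N y j)
            (auxWordLen μP ((N : ℝ) ^ (-1 + ε)) N y j))}).toReal ≤
        (N : ℝ) * Real.exp (-(N : ℝ) ^ (ε / 4) / (3 * ellPlus N γP)) :=
  key_prob_ub_general μP μQ hPstat kP kKB τKB γP hPID hPFE hPKB hsupp ε hε y hy

end ZM
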